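/- arXiv:math/0409431 — 3 statements merged into one kernel-verified Lean document; each statement's English description precedes it below -/
import Mathlib

section
/- Let D ⊆ ℂ^n be a domain and let a, z ∈ D. Then for every N ∈ ℕ one has l_D^N(a,z) ≥ l_D^{N+1}(a,z); that is, the sequence (l_D^N(a,z))_{N∈ℕ} is decreasing. -/
open Metric Set Filter

noncomputable section

/-- `HoloDisc D φ` : `φ` is a holomorphic map from the unit disc `𝔻 ⊆ ℂ` into `D`. -/
def HoloDisc {E : Type*} [NormedAddCommGroup E] [NormedSpace ℂ E]
    (D : Set E) (φ : ℂ → E) : Prop :=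
  DifferentiableOn ℂ φ (Metric.ball 0 1) ∧ Set.MapsTo φ (Metric.ball 0 1) D

/-- The Lempert function `l_D(A,z)` with pole set `A`. -/
def lempert {E : Type*} [NormedAddCommGroup E] [NormedSpace ℂ E]
    (D : Set E) (A : Set E) (z : E) : ℝ :=
  sInf { p : ℝ | ∃ lam : A → ℂ, (∀ a, lam a ∈ Metric.ball (0:ℂ) 1) ∧
    (∃ φ : ℂ → E, HoloDisc D φ ∧ φ 0 = z ∧ ∀ a : A, φ (lam a) = (a : E)) ∧
    p = ∏' a : A, ‖lam a‖ }

/-- The function `l_D^N(a,z)`, `N ∈ ℕ ∪ {∞}` : the infimum of products `∏_{j=1}^N |λ_j|`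
over `N` pairwise distinct points of the disc which are sent to `a` by a holomorphic map
`φ : 𝔻 → D` with `φ(0) = z`. -/
def lemN {E : Type*} [NormedAddCommGroup E] [NormedSpace ℂ E]
    (D : Set E) (N : ℕ∞) (a z : E) : ℝ :=
  sInf { p : ℝ | ∃ lam : {j : ℕ // (j : ℕ∞) < N} → ℂ, Function.Injective lam ∧
    (∀ j, lam j ∈ Metric.ball (0:ℂ) 1) ∧
    (∃ φ : ℂ → E, HoloDisc D φ ∧ φ 0 = z ∧ ∀ j, φ (lam j) = a) ∧
    p = ∏' j, ‖lam j‖ }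

/-!
Precompose a disc `φ` through the poles `λ₁, …, λ_N` with the degree-two Blaschke product
`h_r(μ) = μ (r - μ) / (1 - r μ)`, a holomorphic self-map of the disc fixing `0`. Solving
`h_r(μ) = λ` is a quadratic equation whose two roots lie in the disc; as `r → 1⁻` one of them tends
to `λ` and the other to the boundary point `1`. Keeping the root near every `λ_i` together with the
root near `1` for one of them gives `N + 1` distinct poles of `φ ∘ h_r`, and their product tends to
`∏ |λ_i|`.
-/

open Topology

section BlaschkeProduct

variable {r : ℝ} {l μ : ℂ}

def blaschke2 (r : ℝ) (μ : ℂ) : ℂ := μ * (r - μ) / (1 - r * μ)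

lemma norm_one_sub_mul_sq_sub_norm_sub_sq (r : ℝ) (μ : ℂ) :
    ‖1 - r * μ‖ ^ 2 - ‖(r : ℂ) - μ‖ ^ 2 = (1 - r ^ 2) * (1 - ‖μ‖ ^ 2) := by
  simp only [← Complex.normSq_eq_norm_sq, Complex.normSq_apply, Complex.sub_re, Complex.sub_im,
    Complex.mul_re, Complex.mul_im, Complex.ofReal_re, Complex.ofReal_im, Complex.one_re,
    Complex.one_im]
  ring

lemma norm_sub_le_norm_one_sub_mul (hr : |r| ≤ 1) (hμ : ‖μ‖ ≤ 1) :
    ‖(r : ℂ) - μ‖ ≤ ‖1 - r * μ‖ := by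
  have := norm_one_sub_mul_sq_sub_norm_sub_sq r μ
  have h1 : 0 ≤ 1 - r ^ 2 := by nlinarith [sq_abs r, abs_nonneg r]
  have h2 : 0 ≤ 1 - ‖μ‖ ^ 2 := by nlinarith [norm_nonneg μ]
  exact (sq_le_sq₀ (norm_nonneg _) (norm_nonneg _)).1 (by nlinarith [mul_nonneg h1 h2])

lemma norm_one_sub_mul_le_norm_sub (hr : |r| ≤ 1) (hμ : 1 ≤ ‖μ‖) :
    ‖1 - r * μ‖ ≤ ‖(r : ℂ) - μ‖ := by
  have := norm_one_sub_mul_sq_sub_norm_sub_sq r μ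
  have h1 : 0 ≤ 1 - r ^ 2 := by nlinarith [sq_abs r, abs_nonneg r]
  have h2 : 1 - ‖μ‖ ^ 2 ≤ 0 := by nlinarith
  exact (sq_le_sq₀ (norm_nonneg _) (norm_nonneg _)).1
    (by nlinarith [mul_nonpos_of_nonneg_of_nonpos h1 h2])

lemma one_sub_mul_ne_zero (hr : |r| ≤ 1) (hμ : ‖μ‖ < 1) : 1 - r * μ ≠ 0 := by
  refine sub_ne_zero.2 fun h => ?_
  have : ‖(r : ℂ) * μ‖ < 1 := by
    rw [norm_mul, Complex.norm_real, Real.norm_eq_abs]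
    nlinarith [abs_nonneg r, norm_nonneg μ]
  simp [← h] at this

lemma blaschke2_zero (r : ℝ) : blaschke2 r 0 = 0 := by simp [blaschke2]

lemma norm_blaschke2_lt_one (hr : |r| ≤ 1) (hμ : ‖μ‖ < 1) : ‖blaschke2 r μ‖ < 1 := by
  have hpos : 0 < ‖1 - r * μ‖ := norm_pos_iff.2 (one_sub_mul_ne_zero hr hμ)
  rw [blaschke2, norm_div, norm_mul, div_lt_one hpos]
  calc ‖μ‖ * ‖(r : ℂ) - μ‖ ≤ ‖μ‖ * ‖1 - r * μ‖ := by
        gcongr; exact norm_sub_le_norm_one_sub_mul hr hμ.le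
    _ < ‖1 - r * μ‖ := mul_lt_of_lt_one_left hpos hμ

lemma holoDisc_blaschke2 (hr : |r| ≤ 1) : HoloDisc (ball 0 1) (blaschke2 r) := by
  refine ⟨fun μ hμ => ?_, fun μ hμ => ?_⟩ <;> rw [mem_ball_zero_iff] at hμ
  · have := one_sub_mul_ne_zero hr hμ
    unfold blaschke2
    fun_prop (disch := assumption)
  · exact mem_ball_zero_iff.2 (norm_blaschke2_lt_one hr hμ)

-- `μ * (r - μ) = l * (1 - r * μ)` is `blaschke2 r μ = l` with the denominator cleared.
lemma norm_lt_one_of_mul_sub_eq (hr : |r| < 1) (hl : ‖l‖ < 1)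
    (h : μ * (r - μ) = l * (1 - r * μ)) : ‖μ‖ < 1 := by
  by_contra! hμ
  have hpos : 0 < ‖(r : ℂ) - μ‖ := by
    refine norm_pos_iff.2 (sub_ne_zero.2 fun h' => ?_)
    rw [← h', Complex.norm_real, Real.norm_eq_abs] at hμ
    linarith
  have hnorm := congrArg norm h
  rw [norm_mul, norm_mul] at hnorm
  have := norm_one_sub_mul_le_norm_sub hr.le hμ
  nlinarith [norm_nonneg l]

lemma blaschke2_eq_of_mul_sub_eq (hr : |r| ≤ 1) (hμ : ‖μ‖ < 1)
    (h : μ * (r - μ) = l * (1 - r * μ)) : blaschke2 r μ = l := by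
  rw [blaschke2, div_eq_iff (one_sub_mul_ne_zero hr hμ), h]

end BlaschkeProduct

section Roots

variable {l : ℂ}

/-- A square root of `r² (1 + l)² - 4 l`; dividing by `(1 - l)²` before taking the principal root
makes it continuous at `r = 1`, where the radicand is `(1 - l)²`. -/
def discrSqrt (l : ℂ) (r : ℝ) : ℂ :=
  (1 - l) * ((r ^ 2 * (1 + l) ^ 2 - 4 * l) / (1 - l) ^ 2) ^ (2⁻¹ : ℂ)

def innerRoot (l : ℂ) (r : ℝ) : ℂ := (r * (1 + l) - discrSqrt l r) / 2

def outerRoot (l : ℂ) (r : ℝ) : ℂ := (r * (1 + l) + discrSqrt l r) / 2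

lemma discrSqrt_sq (hl : l ≠ 1) (r : ℝ) : discrSqrt l r ^ 2 = r ^ 2 * (1 + l) ^ 2 - 4 * l := by
  have : (1 - l) ^ 2 ≠ 0 := pow_ne_zero 2 (sub_ne_zero.2 hl.symm)
  rw [discrSqrt, mul_pow, Complex.cpow_ofNat_inv_pow, mul_div_cancel₀ _ this]

lemma discrSqrt_one (hl : l ≠ 1) : discrSqrt l 1 = 1 - l := by
  have : (1 - l) ^ 2 ≠ 0 := pow_ne_zero 2 (sub_ne_zero.2 hl.symm)
  have hrad : ((1 : ℝ) : ℂ) ^ 2 * (1 + l) ^ 2 - 4 * l = (1 - l) ^ 2 := by push_cast; ring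
  rw [discrSqrt, hrad, div_self this, Complex.one_cpow, mul_one]

lemma continuousAt_discrSqrt (hl : l ≠ 1) : ContinuousAt (discrSqrt l) 1 := by
  have : (1 - l) ^ 2 ≠ 0 := pow_ne_zero 2 (sub_ne_zero.2 hl.symm)
  have hrad : ((1 : ℝ) : ℂ) ^ 2 * (1 + l) ^ 2 - 4 * l = (1 - l) ^ 2 := by push_cast; ring
  have hcpow : ContinuousAt (· ^ (2⁻¹ : ℂ))
      ((((1 : ℝ) : ℂ) ^ 2 * (1 + l) ^ 2 - 4 * l) / (1 - l) ^ 2) := by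
    rw [hrad, div_self this]
    exact continuousAt_cpow_const Complex.one_mem_slitPlane
  unfold discrSqrt
  exact continuousAt_const.mul
    (hcpow.comp (f := fun r : ℝ => ((r : ℂ) ^ 2 * (1 + l) ^ 2 - 4 * l) / (1 - l) ^ 2) (by fun_prop))

lemma innerRoot_mul_sub (hl : l ≠ 1) (r : ℝ) :
    innerRoot l r * (r - innerRoot l r) = l * (1 - r * innerRoot l r) := by
  unfold innerRoot
  linear_combination (-1 / 4 : ℂ) * discrSqrt_sq hl r

lemma outerRoot_mul_sub (hl : l ≠ 1) (r : ℝ) :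
    outerRoot l r * (r - outerRoot l r) = l * (1 - r * outerRoot l r) := by
  unfold outerRoot
  linear_combination (-1 / 4 : ℂ) * discrSqrt_sq hl r

lemma innerRoot_one (hl : l ≠ 1) : innerRoot l 1 = l := by
  rw [innerRoot, discrSqrt_one hl]; push_cast; ring

lemma outerRoot_one (hl : l ≠ 1) : outerRoot l 1 = 1 := by
  rw [outerRoot, discrSqrt_one hl]; push_cast; ring

lemma continuousAt_innerRoot (hl : l ≠ 1) : ContinuousAt (innerRoot l) 1 := by
  have := continuousAt_discrSqrt hl
  unfold innerRoot
  fun_prop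

lemma continuousAt_outerRoot (hl : l ≠ 1) : ContinuousAt (outerRoot l) 1 := by
  have := continuousAt_discrSqrt hl
  unfold outerRoot
  fun_prop

end Roots

lemma eventually_injective_of_tendsto {α ι X : Type*} [Finite ι] [TopologicalSpace X]
    [T2Space X] {l : Filter α} {G : α → ι → X} {g : ι → X} (hG : Tendsto G l (𝓝 g))
    (hg : Function.Injective g) : ∀ᶠ x in l, Function.Injective (G x) := by
  have hpair : ∀ j k, ∀ᶠ x in l, G x j = G x k → j = k := by
    intro j k
    by_cases hjk : j = k
    · exact Eventually.of_forall fun _ _ => hjk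
    have hjk' := ((continuous_apply j).tendsto g).comp hG |>.prodMk_nhds
      (((continuous_apply k).tendsto g).comp hG)
    filter_upwards [hjk'.eventually ((isOpen_ne_fun continuous_fst continuous_snd).mem_nhds
      (hg.ne hjk))] with x hx h
    exact absurd h hx
  filter_upwards [eventually_all.2 fun j => eventually_all.2 (hpair j)] with x hx j k
  exact hx j k

lemma HoloDisc.comp {E : Type*} [NormedAddCommGroup E] [NormedSpace ℂ E] {D : Set E}
    {φ : ℂ → E} {f : ℂ → ℂ} (hφ : HoloDisc D φ) (hf : HoloDisc (ball 0 1) f) :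
    HoloDisc D (φ ∘ f) :=
  ⟨hφ.1.comp hf.1 hf.2, hφ.2.comp hf.2⟩

section Admissible

variable {E : Type*} [NormedAddCommGroup E] [NormedSpace ℂ E] {D : Set E} {a z : E}

def IsAdmissiblePoles {ι : Type*} (D : Set E) (a z : E) (lam : ι → ℂ) : Prop :=
  Function.Injective lam ∧ (∀ j, lam j ∈ ball (0 : ℂ) 1) ∧
    ∃ φ : ℂ → E, HoloDisc D φ ∧ φ 0 = z ∧ ∀ j, φ (lam j) = a

lemma IsAdmissiblePoles.comp_injective {ι κ : Type*} {lam : ι → ℂ}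
    (h : IsAdmissiblePoles D a z lam) {e : κ → ι} (he : Function.Injective e) :
    IsAdmissiblePoles D a z (lam ∘ e) := by
  obtain ⟨hinj, hmem, φ, hφ, hφ0, hφa⟩ := h
  exact ⟨hinj.comp he, fun _ => hmem _, φ, hφ, hφ0, fun _ => hφa _⟩

def poleProducts (D : Set E) (N : ℕ) (a z : E) : Set ℝ :=
  (fun lam : Fin N → ℂ => ∏ j, ‖lam j‖) '' {lam | IsAdmissiblePoles D a z lam}

lemma nonneg_of_mem_poleProducts {N : ℕ} {p : ℝ} (hp : p ∈ poleProducts D N a z) : 0 ≤ p := by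
  obtain ⟨lam, -, rfl⟩ := hp
  exact Finset.prod_nonneg fun j _ => norm_nonneg _

lemma lemN_natCast (D : Set E) (N : ℕ) (a z : E) :
    lemN D N a z = sInf (poleProducts D N a z) := by
  let e : Fin N ≃ {j : ℕ // (j : ℕ∞) < N} :=
    Fin.equivSubtype.trans (Equiv.subtypeEquivRight fun _ => Nat.cast_lt.symm)
  have hprod (lam : {j : ℕ // (j : ℕ∞) < N} → ℂ) : ∏' j, ‖lam j‖ = ∏ i, ‖lam (e i)‖ :=
    (e.tprod_eq fun j => ‖lam j‖).symm.trans (tprod_fintype _)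
  refine congrArg sInf (Set.ext fun p => ⟨?_, ?_⟩)
  · rintro ⟨lam, hinj, hmem, hφ, rfl⟩
    exact ⟨lam ∘ e, IsAdmissiblePoles.comp_injective ⟨hinj, hmem, hφ⟩ e.injective,
      (hprod lam).symm⟩
  · rintro ⟨lam, hlam, rfl⟩
    obtain ⟨hinj, hmem, hφ⟩ := hlam.comp_injective e.symm.injective
    exact ⟨lam ∘ e.symm, hinj, hmem, hφ, by simp [hprod]⟩

lemma exists_isAdmissiblePoles_fin_succ_prod_lt {N : ℕ} {lam : Fin N → ℂ}
    (hlam : IsAdmissiblePoles D a z lam) (i₀ : Fin N) {ε : ℝ} (hε : 0 < ε) :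
    ∃ μ : Fin (N + 1) → ℂ, IsAdmissiblePoles D a z μ ∧ ∏ j, ‖μ j‖ < ∏ i, ‖lam i‖ + ε := by
  obtain ⟨hinj, hmem, φ, hφ, hφ0, hφa⟩ := hlam
  have hlt (i : Fin N) : ‖lam i‖ < 1 := mem_ball_zero_iff.1 (hmem i)
  have hne (i : Fin N) : lam i ≠ 1 := fun h => by simpa [h] using hlt i
  let G (r : ℝ) : Fin (N + 1) → ℂ := Fin.cons (outerRoot (lam i₀) r) fun i => innerRoot (lam i) r
  let target : Fin (N + 1) → Fin N := Fin.cons i₀ id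
  have hroot (r : ℝ) (j : Fin (N + 1)) :
      G r j * (r - G r j) = lam (target j) * (1 - r * G r j) :=
    Fin.cases (outerRoot_mul_sub (hne i₀) r) (fun i => innerRoot_mul_sub (hne i) r) j
  have hG : ContinuousAt G 1 :=
    continuousAt_pi.2 (Fin.cases (continuousAt_outerRoot (hne i₀))
      fun i => continuousAt_innerRoot (hne i))
  have hG1 : G 1 = Fin.cons 1 lam := by
    ext j
    exact Fin.cases (outerRoot_one (hne i₀)) (fun i => innerRoot_one (hne i)) j
  have hlim : Tendsto G (𝓝[<] 1) (𝓝 (Fin.cons 1 lam)) :=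
    hG1 ▸ hG.tendsto.mono_left nhdsWithin_le_nhds
  have hprod : Tendsto (fun r => ∏ j, ‖G r j‖) (𝓝[<] 1) (𝓝 (∏ i, ‖lam i‖)) := by
    have := ((continuous_finsetProd Finset.univ fun j _ =>
      (continuous_apply j).norm).tendsto _).comp hlim
    simpa [Fin.prod_univ_succ, Function.comp_def] using this
  have hcons : Function.Injective (Fin.cons 1 lam : Fin (N + 1) → ℂ) :=
    Fin.cons_injective_iff.2 ⟨fun ⟨i, hi⟩ => hne i hi, hinj⟩
  have hIoo : ∀ᶠ r in 𝓝[<] (1 : ℝ), r ∈ Ioo (-1) 1 := Ioo_mem_nhdsLT (by norm_num)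
  obtain ⟨r, hr, hGinj, hGprod⟩ := (hIoo.and
    ((eventually_injective_of_tendsto hlim hcons).and
      (hprod.eventually (gt_mem_nhds (lt_add_of_pos_right _ hε))))).exists
  have hr' : |r| < 1 := abs_lt.2 hr
  have hGlt (j : Fin (N + 1)) : ‖G r j‖ < 1 :=
    norm_lt_one_of_mul_sub_eq hr' (hlt _) (hroot r j)
  refine ⟨G r, ⟨hGinj, fun j => mem_ball_zero_iff.2 (hGlt j), φ ∘ blaschke2 r,
    hφ.comp (holoDisc_blaschke2 hr'.le), by simp [blaschke2_zero, hφ0], fun j => ?_⟩, hGprod⟩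
  simp [blaschke2_eq_of_mul_sub_eq hr'.le (hGlt j) (hroot r j), hφa]

end Admissible

theorem lemN_antitone_general {n : ℕ} (D : Set (Fin n → ℂ)) (a z : Fin n → ℂ) :
    ∀ N : ℕ, lemN D ((N + 1 : ℕ) : ℕ∞) a z ≤ lemN D ((N : ℕ) : ℕ∞) a z := by
  intro N
  rw [lemN_natCast, lemN_natCast]
  rcases (poleProducts D (N + 1) a z).eq_empty_or_nonempty with hT | ⟨_, lam', hlam', rfl⟩
  · rw [hT, Real.sInf_empty]
    exact Real.sInf_nonneg fun _ => nonneg_of_mem_poleProducts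
  have hT : BddBelow (poleProducts D (N + 1) a z) := ⟨0, fun _ => nonneg_of_mem_poleProducts⟩
  refine le_csInf ⟨_, _, hlam'.comp_injective (Fin.succ_injective N), rfl⟩ ?_
  rintro _ ⟨lam, hlam, rfl⟩
  cases N with
  | zero =>
    calc sInf (poleProducts D 1 a z) ≤ ∏ j, ‖lam' j‖ := csInf_le hT ⟨lam', hlam', rfl⟩
      _ ≤ 1 := Finset.prod_le_one (fun _ _ => norm_nonneg _)
          fun j _ => (mem_ball_zero_iff.1 (hlam'.2.1 j)).le
      _ = ∏ j, ‖lam j‖ := by simp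
  | succ N =>
    refine le_of_forall_pos_le_add fun ε hε => ?_
    obtain ⟨μ, hμ, hlt⟩ := exists_isAdmissiblePoles_fin_succ_prod_lt hlam 0 hε
    exact (csInf_le hT ⟨μ, hμ, rfl⟩).trans hlt.le

/-- For a domain `D ⊆ ℂ^n` and `a, z ∈ D`, the sequence `(l_D^N(a,z))_{N ∈ ℕ}` is
decreasing: `l_D^N(a,z) ≥ l_D^{N+1}(a,z)` for every `N`. -/
theorem lemN_antitone {n : ℕ} (D : Set (Fin n → ℂ)) (hDo : IsOpen D) (hDc : IsConnected D)
    (a z : Fin n → ℂ) (ha : a ∈ D) (hz : z ∈ D) :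
    ∀ N : ℕ, lemN D ((N + 1 : ℕ) : ℕ∞) a z ≤ lemN D ((N : ℕ) : ℕ∞) a z :=
  lemN_antitone_general D a z
end
end

section
/- Let A be a nonempty at most countable subset of 𝔻 and let z ∈ 𝔻. Then l_𝔻(A,z) = ∏_{a∈A} |Φ_a(z)|, where Φ_a(λ) = (a − λ)/(1 − conj(a)·λ). -/
/-!
By Schwarz–Pick, a holomorphic self-map `φ` of the disc with `φ 0 = z` and `φ λ = a` satisfies
`|Φ_a(z)| ≤ |λ|`, so every admissible family dominates `∏ |Φ_a(z)|` factor by factor, and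
products of factors in `[0, 1]` are monotone. The bound is attained by the involution `φ = Φ_z`,
which maps `0` to `z` and `Φ_z(a)` to `a`, with `|Φ_z(a)| = |Φ_a(z)|`.
-/

open Metric Set Filter

noncomputable section

open ComplexConjugate

section TprodNonnegLeOne

variable {ι : Type*} {f g : ι → ℝ}

theorem Real.multipliable_of_nonneg_of_le_one (h₀ : ∀ i, 0 ≤ f i) (h₁ : ∀ i, f i ≤ 1) :
    Multipliable f :=
  ⟨_, tendsto_atTop_ciInf (Finset.prod_anti_set_of_le_one h₀ h₁)
    ⟨0, by rintro _ ⟨s, rfl⟩; exact Finset.prod_nonneg fun i _ ↦ h₀ i⟩⟩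

theorem Real.tprod_le_tprod_of_nonneg_of_le_one (hf : ∀ i, 0 ≤ f i) (hfg : ∀ i, f i ≤ g i)
    (hg : ∀ i, g i ≤ 1) : ∏' i, f i ≤ ∏' i, g i :=
  le_of_tendsto_of_tendsto'
    (multipliable_of_nonneg_of_le_one hf fun i ↦ (hfg i).trans (hg i)).hasProd
    (multipliable_of_nonneg_of_le_one (fun i ↦ (hf i).trans (hfg i)) hg).hasProd
    fun _ ↦ Finset.prod_le_prod (fun i _ ↦ hf i) fun i _ ↦ hfg i

end TprodNonnegLeOne

namespace Complex

def mobius (α w : ℂ) : ℂ := (α - w) / (1 - conj α * w)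

@[simp] theorem mobius_zero (α : ℂ) : mobius α 0 = α := by simp [mobius]

@[simp] theorem mobius_zero_left (w : ℂ) : mobius 0 w = -w := by simp [mobius]

@[simp] theorem mobius_self (α : ℂ) : mobius α α = 0 := by simp [mobius]

theorem norm_mobius_comm (α w : ℂ) : ‖mobius α w‖ = ‖mobius w α‖ := by
  rw [mobius, mobius, norm_div, norm_div, norm_sub_rev, ← norm_conj (1 - conj w * α)]
  simp [mul_comm]

theorem one_sub_conj_mul_ne_zero {α w : ℂ} (hα : ‖α‖ < 1) (hw : ‖w‖ ≤ 1) :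
    1 - conj α * w ≠ 0 := by
  intro h
  have : ‖conj α * w‖ = 1 := by rw [← sub_eq_zero.1 h, norm_one]
  rw [norm_mul, norm_conj] at this
  nlinarith [norm_nonneg α, norm_nonneg w]

theorem normSq_one_sub_conj_mul_sub_normSq_sub (α w : ℂ) :
    normSq (1 - conj α * w) - normSq (α - w) = (1 - normSq α) * (1 - normSq w) := by
  simp only [normSq_apply, sub_re, sub_im, mul_re, mul_im, conj_re, conj_im, one_re, one_im]
  ring

theorem norm_mobius_lt_one {α w : ℂ} (hα : ‖α‖ < 1) (hw : ‖w‖ < 1) : ‖mobius α w‖ < 1 := by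
  have hpos : 0 < (1 - normSq α) * (1 - normSq w) := by
    rw [normSq_eq_norm_sq, normSq_eq_norm_sq]
    exact mul_pos (by nlinarith [norm_nonneg α]) (by nlinarith [norm_nonneg w])
  have key := normSq_one_sub_conj_mul_sub_normSq_sub α w
  rw [normSq_eq_norm_sq, normSq_eq_norm_sq] at key
  rw [mobius, norm_div, div_lt_one (norm_pos_iff.2 (one_sub_conj_mul_ne_zero hα hw.le))]
  exact lt_of_pow_lt_pow_left₀ 2 (norm_nonneg _) (by linarith)

theorem mapsTo_mobius_ball {α : ℂ} (hα : α ∈ ball (0 : ℂ) 1) :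
    MapsTo (mobius α) (ball 0 1) (ball 0 1) := fun _ hw ↦
  mem_ball_zero_iff.2 <| norm_mobius_lt_one (mem_ball_zero_iff.1 hα) (mem_ball_zero_iff.1 hw)

theorem mobius_mobius {α w : ℂ} (hα : ‖α‖ < 1) (hw : ‖w‖ ≤ 1) :
    mobius α (mobius α w) = w := by
  have hd := one_sub_conj_mul_ne_zero hα hw
  have hdα := one_sub_conj_mul_ne_zero hα hα.le
  have hnum :
      α - (α - w) / (1 - conj α * w) = w * (1 - conj α * α) / (1 - conj α * w) := by
    rw [eq_div_iff hd, sub_mul, div_mul_cancel₀ _ hd]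
    ring
  have hden :
      1 - conj α * ((α - w) / (1 - conj α * w)) = (1 - conj α * α) / (1 - conj α * w) := by
    rw [eq_div_iff hd, sub_mul, mul_assoc, div_mul_cancel₀ _ hd]
    ring
  rw [mobius, mobius, hnum, hden, div_div_div_cancel_right₀ hd, mul_div_cancel_right₀ _ hdα]

theorem differentiableOn_mobius {α : ℂ} (hα : ‖α‖ < 1) :
    DifferentiableOn ℂ (mobius α) (closedBall 0 1) :=
  DifferentiableOn.div (by fun_prop) (by fun_prop) fun _ hw ↦
    one_sub_conj_mul_ne_zero hα (mem_closedBall_zero_iff.1 hw)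

theorem norm_mobius_apply_le_of_mapsTo_ball {φ : ℂ → ℂ}
    (hd : DifferentiableOn ℂ φ (ball 0 1)) (hm : MapsTo φ (ball 0 1) (ball 0 1)) {z w : ℂ}
    (hz : z ∈ ball (0 : ℂ) 1) (hw : w ∈ ball (0 : ℂ) 1) : ‖mobius (φ z) (φ w)‖ ≤ ‖mobius z w‖ := by
  have hz' := mem_ball_zero_iff.1 hz
  have hφz := mem_ball_zero_iff.1 (hm hz)
  have hg_diff : DifferentiableOn ℂ (mobius (φ z) ∘ φ ∘ mobius z) (ball 0 1) :=
    ((differentiableOn_mobius hφz).mono ball_subset_closedBall).comp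
      (hd.comp ((differentiableOn_mobius hz').mono ball_subset_closedBall)
        (mapsTo_mobius_ball hz))
      (hm.comp (mapsTo_mobius_ball hz))
  have hg_maps : MapsTo (mobius (φ z) ∘ φ ∘ mobius z) (ball 0 1) (closedBall 0 1) :=
    ((mapsTo_mobius_ball (hm hz)).comp (hm.comp (mapsTo_mobius_ball hz))).mono_right
      ball_subset_closedBall
  simpa [mobius_mobius hz' (mem_ball_zero_iff.1 hw).le] using
    norm_le_norm_of_mapsTo_ball hg_diff hg_maps (by simp)
      (norm_mobius_lt_one hz' (mem_ball_zero_iff.1 hw))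

end Complex

open Complex in
theorem lempert_disc_formula_general (A : Set ℂ) (hA : A ⊆ Metric.ball (0:ℂ) 1)
    (z : ℂ) (hz : z ∈ Metric.ball (0:ℂ) 1) :
    lempert (Metric.ball (0:ℂ) 1) A z =
      ∏' a : A, ‖((a : ℂ) - z) / (1 - (starRingEnd ℂ) (a : ℂ) * z)‖ := by
  have hz' := mem_ball_zero_iff.1 hz
  have hΦ : HoloDisc (ball 0 1) (mobius z) :=
    ⟨(differentiableOn_mobius hz').mono ball_subset_closedBall, mapsTo_mobius_ball hz⟩
  refine IsLeast.csInf_eq ⟨⟨fun a ↦ mobius z a, fun a ↦ mapsTo_mobius_ball hz (hA a.2),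
    ⟨mobius z, hΦ, mobius_zero z, fun a ↦ mobius_mobius hz' (mem_ball_zero_iff.1 (hA a.2)).le⟩,
    tprod_congr fun a ↦ norm_mobius_comm a z⟩, ?_⟩
  rintro _ ⟨lam, hlam, ⟨φ, ⟨hφd, hφm⟩, hφ0, hφlam⟩, rfl⟩
  refine Real.tprod_le_tprod_of_nonneg_of_le_one (fun _ ↦ norm_nonneg _) (fun a ↦ ?_)
    fun a ↦ (mem_ball_zero_iff.1 (hlam a)).le
  have := norm_mobius_apply_le_of_mapsTo_ball hφd hφm (mem_ball_self one_pos) (hlam a)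
  rwa [hφ0, hφlam a, mobius_zero_left, norm_neg, norm_mobius_comm] at this

/-- For a nonempty at most countable `A ⊆ 𝔻` and `z ∈ 𝔻`,
`l_𝔻(A,z) = ∏_{a ∈ A} |Φ_a(z)|` where `Φ_a(λ) = (a - λ)/(1 - conj(a)·λ)`. -/
theorem lempert_disc_formula (A : Set ℂ) (hA : A ⊆ Metric.ball (0:ℂ) 1)
    (hAne : A.Nonempty) (hAc : A.Countable) (z : ℂ) (hz : z ∈ Metric.ball (0:ℂ) 1) :
    lempert (Metric.ball (0:ℂ) 1) A z =
      ∏' a : A, ‖((a : ℂ) - z) / (1 - (starRingEnd ℂ) (a : ℂ) * z)‖ :=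
  lempert_disc_formula_general A hA z hz
end
end

section
/- Let a, z ∈ 𝔻 and N ∈ ℕ ∪ {∞} with N ≥ 1. Then l_𝔻^N(a,z) = |Φ_a(z)|, where Φ_a(λ) = (a − λ)/(1 − conj(a)·λ). -/
open Metric Set Filter

noncomputable section

/-!
Write `Φ_a = moebius a`. Composing with `Φ_a` turns an admissible disc into a self-map `f` of `𝔻`
with `f 0 = Φ_a(z)` vanishing at the `λ_j`. Dividing out these zeros one Möbius factor at a time
(Schwarz lemma) gives `|Φ_a(z)| ≤ ∏_{j ∈ s} |λ_j|` for every finite `s`, hence for the product.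

Conversely, the singular inner function `S(x) = exp ((x + 1) / (x - 1))` takes the value
`t = e^L` (`L < 0`) at the infinitely many points `cayley (L + 2πik)`, all of modulus at least
`(1 + L) / (1 - L)`. For `L` close to `0` the map `h = Φ_t ∘ S` therefore has `|h 0|` close to `1`
and infinitely many zeros close to the circle. Then `x ↦ Φ_a (Φ_{w'}(x) · h x)` with
`w' = Φ_a(z) / h 0` sends `0` to `z` and `w'` together with the zeros of `h` to `a`; as all
points lie in `𝔻`, the product is at most `|w'|`, which is close to `|Φ_a(z)|`.
-/

open Topology ComplexConjugate

def moebius (α x : ℂ) : ℂ := (α - x) / (1 - conj α * x)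

section Moebius

variable {α x : ℂ}

lemma one_sub_conj_mul_ne_zero (hα : ‖α‖ < 1) (hx : ‖x‖ ≤ 1) : 1 - conj α * x ≠ 0 := by
  intro h
  have : ‖conj α * x‖ = 1 := by rw [← sub_eq_zero.mp h, norm_one]
  rw [norm_mul, Complex.norm_conj] at this
  nlinarith [norm_nonneg α, norm_nonneg x]

@[simp] lemma moebius_zero (α : ℂ) : moebius α 0 = α := by simp [moebius]

@[simp] lemma moebius_self (α : ℂ) : moebius α α = 0 := by simp [moebius]

lemma moebius_eq_zero_iff (hα : ‖α‖ < 1) (hx : ‖x‖ ≤ 1) : moebius α x = 0 ↔ x = α := by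
  rw [moebius, div_eq_zero_iff, sub_eq_zero, eq_comm]
  simp [one_sub_conj_mul_ne_zero hα hx]

lemma moebius_moebius (hα : ‖α‖ < 1) (hx : ‖x‖ ≤ 1) : moebius α (moebius α x) = x := by
  have hd := one_sub_conj_mul_ne_zero hα hx
  have hαα := one_sub_conj_mul_ne_zero hα hα.le
  have num : α - (α - x) / (1 - conj α * x) = x * (1 - conj α * α) / (1 - conj α * x) := by
    rw [eq_div_iff hd, sub_mul, div_mul_cancel₀ _ hd]; ring
  have den : 1 - conj α * ((α - x) / (1 - conj α * x)) = (1 - conj α * α) / (1 - conj α * x) := by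
    field_simp; ring
  rw [moebius, moebius, num, den, div_div_div_cancel_right₀ hd, mul_div_cancel_right₀ _ hαα]

lemma norm_moebius_lt_one (hα : ‖α‖ < 1) (hx : ‖x‖ < 1) : ‖moebius α x‖ < 1 := by
  have hd := one_sub_conj_mul_ne_zero hα hx.le
  have key : ‖1 - conj α * x‖ ^ 2 - ‖α - x‖ ^ 2 = (1 - ‖α‖ ^ 2) * (1 - ‖x‖ ^ 2) := by
    simp only [← Complex.normSq_eq_norm_sq, Complex.normSq_apply, Complex.sub_re, Complex.sub_im,
      Complex.mul_re, Complex.mul_im, Complex.one_re, Complex.one_im, Complex.conj_re,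
      Complex.conj_im]
    ring
  have hpos : 0 < (1 - ‖α‖ ^ 2) * (1 - ‖x‖ ^ 2) := by
    apply mul_pos <;> nlinarith [norm_nonneg α, norm_nonneg x]
  rw [moebius, norm_div, div_lt_one (norm_pos_iff.mpr hd),
    ← sq_lt_sq₀ (norm_nonneg _) (norm_nonneg _)]
  linarith

lemma mapsTo_moebius (hα : ‖α‖ < 1) : MapsTo (moebius α) (ball 0 1) (ball 0 1) := fun x hx ↦ by
  rw [mem_ball_zero_iff] at hx ⊢
  exact norm_moebius_lt_one hα hx

lemma differentiableOn_moebius (hα : ‖α‖ < 1) : DifferentiableOn ℂ (moebius α) (ball 0 1) :=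
  (differentiableOn_const α |>.sub differentiableOn_id).div
    (differentiableOn_const 1 |>.sub (differentiableOn_const _ |>.mul differentiableOn_id))
    fun _ hx ↦ one_sub_conj_mul_ne_zero hα (mem_ball_zero_iff.mp hx).le

end Moebius

section Blaschke

variable {E : Type*} [NormedAddCommGroup E] [NormedSpace ℂ E] [CompleteSpace E] {f : ℂ → E}

lemma exists_eq_moebius_smul_of_eq_zero {c : ℂ} (hc : c ∈ ball (0 : ℂ) 1)
    (hf : DifferentiableOn ℂ f (ball 0 1)) (hf1 : MapsTo f (ball 0 1) (closedBall 0 1))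
    (hfc : f c = 0) :
    ∃ g : ℂ → E, DifferentiableOn ℂ g (ball 0 1) ∧ MapsTo g (ball 0 1) (closedBall 0 1) ∧
      ∀ x ∈ ball (0 : ℂ) 1, f x = moebius c x • g x := by
  have hc' : ‖c‖ < 1 := mem_ball_zero_iff.mp hc
  set h := f ∘ moebius c
  have hh : DifferentiableOn ℂ h (ball 0 1) :=
    hf.comp (differentiableOn_moebius hc') (mapsTo_moebius hc')
  have hh0 : h 0 = 0 := by simp [h, hfc]
  refine ⟨dslope h 0 ∘ moebius c, ?_, fun x hx ↦ ?_, fun x hx ↦ ?_⟩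
  · exact ((Complex.differentiableOn_dslope (ball_mem_nhds 0 one_pos)).mpr hh).comp
      (differentiableOn_moebius hc') (mapsTo_moebius hc')
  · have hh1 : MapsTo h (ball 0 1) (closedBall (h 0) 1) := hh0 ▸ hf1.comp (mapsTo_moebius hc')
    simpa using Complex.norm_dslope_le_div_of_mapsTo_ball hh hh1 (mapsTo_moebius hc' hx)
  · have := sub_smul_dslope h 0 (moebius c x)
    simp only [sub_zero, hh0, h, Function.comp_apply,
      moebius_moebius hc' (mem_ball_zero_iff.mp hx).le] at this
    exact this.symm

theorem norm_le_prod_norm_of_eq_zero (s : Finset ℂ) (hs : ↑s ⊆ ball (0 : ℂ) 1)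
    (hf : DifferentiableOn ℂ f (ball 0 1)) (hf1 : MapsTo f (ball 0 1) (closedBall 0 1))
    (hzero : ∀ x ∈ s, f x = 0) : ‖f 0‖ ≤ ∏ x ∈ s, ‖x‖ := by
  classical
  induction s using Finset.induction_on generalizing f with
  | empty => simpa using hf1 (mem_ball_self one_pos)
  | insert c s hcs ih =>
    rw [Finset.coe_insert, insert_subset_iff] at hs
    obtain ⟨g, hg, hg1, hfg⟩ :=
      exists_eq_moebius_smul_of_eq_zero hs.1 hf hf1 (hzero c (Finset.mem_insert_self c s))
    have hgs : ∀ x ∈ s, g x = 0 := fun x hx ↦ by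
      have hx1 := hs.2 hx
      have hmx : moebius c x ≠ 0 := by
        rw [Ne, moebius_eq_zero_iff (mem_ball_zero_iff.mp hs.1) (mem_ball_zero_iff.mp hx1).le]
        exact ne_of_mem_of_not_mem hx hcs
      have := hfg x hx1
      rw [hzero x (Finset.mem_insert_of_mem hx), eq_comm, smul_eq_zero] at this
      exact this.resolve_left hmx
    rw [Finset.prod_insert hcs, hfg 0 (mem_ball_self one_pos), norm_smul, moebius_zero]
    gcongr
    exact ih hs.2 hg hg1 hgs

end Blaschke

section Products

variable {ι : Type*} {f : ι → ℝ}

lemma multipliable_of_nonneg_of_le_one (h0 : ∀ i, 0 ≤ f i) (h1 : ∀ i, f i ≤ 1) :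
    Multipliable f :=
  ⟨_, tendsto_atTop_ciInf (Finset.prod_anti_set_of_le_one h0 h1)
    ⟨0, forall_mem_range.mpr fun _ ↦ Finset.prod_nonneg fun i _ ↦ h0 i⟩⟩

lemma tprod_le_of_nonneg_of_le_one (h0 : ∀ i, 0 ≤ f i) (h1 : ∀ i, f i ≤ 1) (i : ι) :
    ∏' j, f j ≤ f i := by
  classical
  simpa using (Finset.prod_anti_set_of_le_one h0 h1).le_of_tendsto
    (multipliable_of_nonneg_of_le_one h0 h1).hasProd {i}

lemma le_tprod_of_le_prod {r : ℝ} (hr : r ≤ 1) (h : ∀ s : Finset ι, r ≤ ∏ i ∈ s, f i) :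
    r ≤ ∏' i, f i := by
  by_cases hf : Multipliable f
  · exact ge_of_tendsto' hf.hasProd h
  · rwa [tprod_eq_one_of_not_multipliable hf]

end Products

def cayley (x : ℂ) : ℂ := (x + 1) / (x - 1)

def singularInner (x : ℂ) : ℂ := Complex.exp (cayley x)

section Cayley

variable {x μ : ℂ}

lemma cayley_cayley (hx : x ≠ 1) : cayley (cayley x) = x := by
  have hx' : x - 1 ≠ 0 := sub_ne_zero.mpr hx
  unfold cayley
  rw [div_add_one hx', div_sub_one hx', div_div_div_cancel_right₀ hx',
    div_eq_iff (by ring_nf; norm_num)]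
  ring

lemma injOn_cayley : InjOn cayley {1}ᶜ :=
  LeftInvOn.injOn fun _ hx ↦ cayley_cayley hx

lemma re_cayley_neg (hx : ‖x‖ < 1) : (cayley x).re < 0 := by
  have hx1 : x - 1 ≠ 0 := sub_ne_zero.mpr fun h ↦ by simp [h] at hx
  have hxx : x.re * x.re + x.im * x.im < 1 := by
    rw [← Complex.normSq_apply, Complex.normSq_eq_norm_sq]; nlinarith [norm_nonneg x]
  rw [cayley, Complex.div_re, ← add_div]
  apply div_neg_of_neg_of_pos _ (Complex.normSq_pos.mpr hx1)
  simp only [Complex.add_re, Complex.add_im, Complex.sub_re, Complex.sub_im, Complex.one_re,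
    Complex.one_im]
  linarith

lemma norm_cayley_lt_one (hμ : μ.re < 0) : ‖cayley μ‖ < 1 := by
  have hμ1 : μ - 1 ≠ 0 := sub_ne_zero.mpr fun h ↦ by simp [h] at hμ; linarith
  rw [cayley, norm_div, div_lt_one (norm_pos_iff.mpr hμ1),
    ← sq_lt_sq₀ (norm_nonneg _) (norm_nonneg _), ← Complex.normSq_eq_norm_sq,
    ← Complex.normSq_eq_norm_sq]
  simp only [Complex.normSq_apply, Complex.add_re, Complex.add_im, Complex.sub_re,
    Complex.sub_im, Complex.one_re, Complex.one_im]
  nlinarith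

lemma div_le_norm_cayley (hμ : μ.re ≤ 0) : (1 + μ.re) / (1 - μ.re) ≤ ‖cayley μ‖ := by
  have hμ1 : μ - 1 ≠ 0 := sub_ne_zero.mpr fun h ↦ by simp [h] at hμ; linarith
  rw [cayley, norm_div, div_le_div_iff₀ (by linarith) (norm_pos_iff.mpr hμ1)]
  rcases le_or_gt (1 + μ.re) 0 with hle | hlt
  · nlinarith [norm_nonneg (μ - 1), norm_nonneg (μ + 1)]
  rw [← sq_le_sq₀ (mul_nonneg hlt.le (norm_nonneg _))
    (mul_nonneg (norm_nonneg _) (by linarith)), mul_pow, mul_pow,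
    ← Complex.normSq_eq_norm_sq, ← Complex.normSq_eq_norm_sq]
  simp only [Complex.normSq_apply, Complex.add_re, Complex.add_im, Complex.sub_re,
    Complex.sub_im, Complex.one_re, Complex.one_im]
  nlinarith [mul_nonneg (neg_nonneg.mpr hμ) (mul_self_nonneg μ.im)]

end Cayley

section SingularInner

lemma differentiableOn_singularInner : DifferentiableOn ℂ singularInner (ball 0 1) := by
  refine ((differentiableOn_id.add_const 1).div (differentiableOn_id.sub_const 1) ?_).cexp
  intro x hx h
  rw [sub_eq_zero] at h
  simp [h] at hx

lemma mapsTo_singularInner : MapsTo singularInner (ball 0 1) (ball 0 1) := fun x hx ↦ by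
  rw [mem_ball_zero_iff] at hx ⊢
  rw [singularInner, Complex.norm_exp, Real.exp_lt_one_iff]
  exact re_cayley_neg hx

lemma singularInner_zero : singularInner 0 = Real.exp (-1) := by
  simp [singularInner, cayley]

lemma singularInner_cayley {μ : ℂ} (hμ : μ ≠ 1) : singularInner (cayley μ) = Complex.exp μ := by
  rw [singularInner, cayley_cayley hμ]

end SingularInner

lemma tendsto_moebius_one {x : ℂ} (hx : x ≠ 1) : Tendsto (moebius · x) (𝓝 1) (𝓝 1) := by
  have hx' : 1 - x ≠ 0 := sub_ne_zero.mpr hx.symm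
  have : ContinuousAt (moebius · x) 1 := by
    unfold moebius; fun_prop (disch := simpa using hx')
  simpa [moebius, div_self hx'] using this.tendsto

open Complex in
theorem exists_injective_zeros_norm_gt {δ : ℝ} (hδ : δ < 1) :
    ∃ h : ℂ → ℂ, DifferentiableOn ℂ h (ball 0 1) ∧ MapsTo h (ball 0 1) (ball 0 1) ∧
      δ < ‖h 0‖ ∧ ∃ ζ : ℕ → ℂ, Function.Injective ζ ∧
        ∀ k, ζ k ∈ ball (0 : ℂ) 1 ∧ δ < ‖ζ k‖ ∧ h (ζ k) = 0 := by
  have hlim₁ : Tendsto (fun L : ℝ ↦ ‖moebius (Real.exp L) (Real.exp (-1))‖) (𝓝 0) (𝓝 1) := by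
    have hexp : Tendsto (fun L : ℝ ↦ ((Real.exp L : ℝ) : ℂ)) (𝓝 0) (𝓝 1) :=
      (continuous_ofReal.comp Real.continuous_exp).tendsto' 0 1 (by simp)
    have hne : ((Real.exp (-1) : ℝ) : ℂ) ≠ 1 := by
      exact_mod_cast (Real.exp_lt_one_iff.mpr (by norm_num)).ne
    simpa using ((tendsto_moebius_one hne).comp hexp).norm
  have hlim₂ : Tendsto (fun L : ℝ ↦ (1 + L) / (1 - L)) (𝓝 0) (𝓝 1) := by
    have : ContinuousAt (fun L : ℝ ↦ (1 + L) / (1 - L)) 0 := by fun_prop (disch := norm_num)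
    simpa using this.tendsto
  obtain ⟨L, hL0, hh0, hζ⟩ : ∃ L : ℝ, L < 0 ∧ δ < ‖moebius (Real.exp L) (Real.exp (-1))‖ ∧
      δ < (1 + L) / (1 - L) := by
    have := (hlim₁.eventually (lt_mem_nhds hδ)).and (hlim₂.eventually (lt_mem_nhds hδ))
    exact (eventually_mem_nhdsWithin.and (this.filter_mono nhdsWithin_le_nhds)).exists
      (f := 𝓝[<] 0)
  set t : ℂ := ↑(Real.exp L)
  have ht : ‖t‖ < 1 := by
    rw [norm_real, Real.norm_of_nonneg (Real.exp_pos L).le]; exact Real.exp_lt_one_iff.mpr hL0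
  set μ : ℕ → ℂ := fun k ↦ L + k * (2 * Real.pi * I)
  have hμre (k : ℕ) : (μ k).re = L := by simp [μ]
  have hμ1 (k : ℕ) : μ k ≠ 1 := fun h ↦ by
    have := hμre k; rw [h, one_re] at this; linarith
  refine ⟨moebius t ∘ singularInner,
    (differentiableOn_moebius ht).comp differentiableOn_singularInner mapsTo_singularInner,
    (mapsTo_moebius ht).comp mapsTo_singularInner, by simpa [singularInner_zero] using hh0,
    cayley ∘ μ, fun j k hjk ↦ ?_, fun k ↦ ⟨?_, ?_, ?_⟩⟩
  · have := injOn_cayley (hμ1 j) (hμ1 k) hjk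
    simpa [μ, two_pi_I_ne_zero] using this
  · exact mem_ball_zero_iff.mpr (norm_cayley_lt_one ((hμre k).trans_lt hL0))
  · exact hζ.trans_le (hμre k ▸ div_le_norm_cayley ((hμre k).trans_le hL0.le))
  · simp [singularInner_cayley (hμ1 k), μ, exp_add, t, exp_nat_mul_two_pi_mul_I]

lemma exists_mem_Ioo_div_lt_self_and_lt {r q : ℝ} (hr1 : r < 1) (hq : r < q) :
    ∃ δ ∈ Ioo (0 : ℝ) 1, r / δ < δ ∧ r / δ < q := by
  have hlim : Tendsto (fun δ : ℝ ↦ r / δ) (𝓝 1) (𝓝 r) := by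
    have : ContinuousAt (fun δ : ℝ ↦ r / δ) 1 := by fun_prop (disch := norm_num)
    simpa using this.tendsto
  have hev : ∀ᶠ δ in 𝓝 (1 : ℝ), 0 < δ ∧ r / δ < δ ∧ r / δ < q :=
    (eventually_gt_nhds one_pos).and
      ((hlim.eventually_lt tendsto_id hr1).and (hlim.eventually (gt_mem_nhds hq)))
  obtain ⟨δ, hδ1, hδ0, hδ⟩ :=
    (eventually_mem_nhdsWithin.and (hev.filter_mono nhdsWithin_le_nhds)).exists (f := 𝓝[<] 1)
  exact ⟨δ, ⟨hδ0, hδ1⟩, hδ⟩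

def admissibleProducts {E : Type*} [NormedAddCommGroup E] [NormedSpace ℂ E]
    (D : Set E) (N : ℕ∞) (a z : E) : Set ℝ :=
  { p : ℝ | ∃ lam : {j : ℕ // (j : ℕ∞) < N} → ℂ, Function.Injective lam ∧
    (∀ j, lam j ∈ Metric.ball (0:ℂ) 1) ∧
    (∃ φ : ℂ → E, HoloDisc D φ ∧ φ 0 = z ∧ ∀ j, φ (lam j) = a) ∧
    p = ∏' j, ‖lam j‖ }

lemma lemN_eq_sInf_admissibleProducts {E : Type*} [NormedAddCommGroup E] [NormedSpace ℂ E]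
    (D : Set E) (N : ℕ∞) (a z : E) : lemN D N a z = sInf (admissibleProducts D N a z) :=
  rfl

section Admissible

variable {N : ℕ∞} {a z : ℂ}

theorem norm_moebius_le_of_mem_admissibleProducts (ha : ‖a‖ < 1) {p : ℝ}
    (hp : p ∈ admissibleProducts (ball 0 1) N a z) : ‖moebius a z‖ ≤ p := by
  classical
  obtain ⟨lam, hinj, hlam, ⟨φ, ⟨hφ, hφD⟩, rfl, hφa⟩, rfl⟩ := hp
  refine le_tprod_of_le_prod
    (norm_moebius_lt_one ha (mem_ball_zero_iff.mp (hφD (mem_ball_self one_pos)))).le fun s ↦ ?_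
  rw [← Finset.prod_image fun i _ j _ h ↦ hinj h]
  exact norm_le_prod_norm_of_eq_zero (f := moebius a ∘ φ) _
    (by rw [Finset.coe_image, image_subset_iff]; exact fun j _ ↦ hlam j)
    ((differentiableOn_moebius ha).comp hφ hφD)
    (((mapsTo_moebius ha).comp hφD).mono_right ball_subset_closedBall)
    (Finset.forall_mem_image.mpr fun j _ ↦ by simp [hφa])

theorem exists_mem_admissibleProducts_le_of_zeros (hN : 1 ≤ N) (ha : ‖a‖ < 1) (hz : ‖z‖ < 1)
    {h : ℂ → ℂ} (hh : DifferentiableOn ℂ h (ball 0 1)) (hhD : MapsTo h (ball 0 1) (ball 0 1))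
    {ζ : ℕ → ℂ} (hζinj : Function.Injective ζ) (hζD : ∀ k, ζ k ∈ ball (0 : ℂ) 1)
    (hhζ : ∀ k, h (ζ k) = 0) {w : ℂ} (hw : ‖w‖ < 1) (hwζ : ∀ k, ζ k ≠ w)
    (hwh : w * h 0 = moebius a z) :
    ∃ p ∈ admissibleProducts (ball 0 1) N a z, p ≤ ‖w‖ := by
  set lam : ℕ → ℂ := fun | 0 => w | k + 1 => ζ k
  have hlam : ∀ k, lam k ∈ ball (0 : ℂ) 1 := by
    rintro (_ | k)
    · exact mem_ball_zero_iff.mpr hw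
    · exact hζD k
  have hinj : Function.Injective lam := by
    rintro (_ | j) (_ | k) hjk
    · rfl
    · exact absurd hjk.symm (hwζ k)
    · exact absurd hjk (hwζ j)
    · exact congrArg _ (hζinj hjk)
  set f := fun x ↦ moebius w x * h x
  have hfD : MapsTo f (ball 0 1) (ball 0 1) := fun x hx ↦ by
    have h₁ := mem_ball_zero_iff.mp (mapsTo_moebius hw hx)
    have h₂ := mem_ball_zero_iff.mp (hhD hx)
    rw [mem_ball_zero_iff, norm_mul]
    exact mul_lt_one_of_nonneg_of_lt_one_left (norm_nonneg _) h₁ h₂.le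
  have hflam : ∀ k, f (lam k) = 0 := by
    rintro (_ | k)
    · simp [f, lam]
    · simp [f, lam, hhζ k]
  have h0N : ((0 : ℕ) : ℕ∞) < N := by rw [Nat.cast_zero]; exact zero_lt_one.trans_le hN
  refine ⟨_, ⟨fun j ↦ lam j, hinj.comp Subtype.val_injective, fun j ↦ hlam j,
    ⟨moebius a ∘ f, ⟨(differentiableOn_moebius ha).comp
      ((differentiableOn_moebius hw).mul hh) hfD, (mapsTo_moebius ha).comp hfD⟩,
    by simp [f, hwh, moebius_moebius ha hz.le], fun j ↦ by simp [hflam]⟩, rfl⟩, ?_⟩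
  exact tprod_le_of_nonneg_of_le_one (f := fun j : {j : ℕ // (j : ℕ∞) < N} ↦ ‖lam j‖)
    (fun _ ↦ norm_nonneg _) (fun j ↦ (mem_ball_zero_iff.mp (hlam j)).le) ⟨0, h0N⟩

theorem exists_mem_admissibleProducts_lt (hN : 1 ≤ N) (ha : ‖a‖ < 1) (hz : ‖z‖ < 1) {q : ℝ}
    (hq : ‖moebius a z‖ < q) : ∃ p ∈ admissibleProducts (ball 0 1) N a z, p < q := by
  obtain ⟨δ, ⟨hδ0, hδ1⟩, hδ, hδq⟩ := exists_mem_Ioo_div_lt_self_and_lt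
    (norm_moebius_lt_one ha hz) hq
  obtain ⟨h, hh, hhD, hh0, ζ, hζinj, hζ⟩ := exists_injective_zeros_norm_gt hδ1
  have hw : ‖moebius a z / h 0‖ ≤ ‖moebius a z‖ / δ := by
    rw [norm_div]; exact div_le_div_of_nonneg_left (norm_nonneg _) hδ0 hh0.le
  obtain ⟨p, hp, hpw⟩ := exists_mem_admissibleProducts_le_of_zeros hN ha hz hh hhD hζinj
    (fun k ↦ (hζ k).1) (fun k ↦ (hζ k).2.2) ((hw.trans_lt hδ).trans hδ1)
    (fun k ↦ ne_of_apply_ne norm ((hw.trans_lt hδ).trans (hζ k).2.1).ne')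
    (div_mul_cancel₀ _ (norm_pos_iff.mp (hδ0.le.trans_lt hh0)))
  exact ⟨p, hp, hpw.trans_lt (hw.trans_lt hδq)⟩

end Admissible

/-- For `a, z ∈ 𝔻` and `N ∈ ℕ ∪ {∞}` with `N ≥ 1`,
`l_𝔻^N(a,z) = |Φ_a(z)|` where `Φ_a(λ) = (a - λ)/(1 - conj(a)·λ)`. -/
theorem lemN_disc_formula (a z : ℂ) (ha : a ∈ Metric.ball (0:ℂ) 1)
    (hz : z ∈ Metric.ball (0:ℂ) 1) (N : ℕ∞) (hN : 1 ≤ N) :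
    lemN (Metric.ball (0:ℂ) 1) N a z =
      ‖(a - z) / (1 - (starRingEnd ℂ) a * z)‖ := by
  rw [mem_ball_zero_iff] at ha hz
  rw [lemN_eq_sInf_admissibleProducts]
  obtain ⟨p, hp, -⟩ := exists_mem_admissibleProducts_lt hN ha hz (norm_moebius_lt_one ha hz)
  exact csInf_eq_of_forall_ge_of_forall_gt_exists_lt ⟨p, hp⟩
    (fun _ ↦ norm_moebius_le_of_mem_admissibleProducts ha)
    (fun _ ↦ exists_mem_admissibleProducts_lt hN ha hz)
end
end
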